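/- Every complete body C of diameter δ in H^d equals the intersection of all closed balls of radius δ centered at points of C. -/

import Mathlib

/- We formalize hyperbolic space `H^d` via the Beltrami–Klein model: the open
unit ball of `ℝ^d`, where hyperbolic geodesic segments are exactly Euclidean
segments (so hyperbolic convexity = Euclidean convexity), hyperplanes are
chords of affine hyperplanes, and the hyperbolic distance is given by the
Cayley–Klein formula `cosh d(x,y) = (1 - ⟪x,y⟫)/√((1-‖x‖²)(1-‖y‖²))`. -/

noncomputable section
open Metric Set RealInnerProductSpace

namespace Hyp

abbrev E (d : ℕ) := EuclideanSpace ℝ (Fin d)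

/-- The Klein model of `H^d`: the open unit ball. -/
def ball01 (d : ℕ) : Set (E d) := Metric.ball 0 1

/-- Inverse hyperbolic cosine. -/
def acosh (z : ℝ) : ℝ := Real.log (z + Real.sqrt (z ^ 2 - 1))

/-- Hyperbolic distance in the Beltrami–Klein model. -/
def hDist {d : ℕ} (x y : E d) : ℝ :=
  acosh ((1 - (inner ℝ x y : ℝ)) / (Real.sqrt (1 - ‖x‖ ^ 2) * Real.sqrt (1 - ‖y‖ ^ 2)))

/-- Hyperbolic diameter of a set. -/
def hDiam {d : ℕ} (C : Set (E d)) : ℝ :=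
  sSup {r | ∃ a ∈ C, ∃ b ∈ C, hDist a b = r}

/-- Hyperbolic (infimal) distance between two sets. -/
def hSetDist {d : ℕ} (A B : Set (E d)) : ℝ :=
  sInf {r | ∃ a ∈ A, ∃ b ∈ B, hDist a b = r}

/-- Hyperbolic distance from a point to a set. -/
def hPointDist {d : ℕ} (x : E d) (A : Set (E d)) : ℝ :=
  sInf {r | ∃ a ∈ A, hDist x a = r}

/-- Closed hyperbolic ball of radius `r` about `x`. -/
def hBall {d : ℕ} (x : E d) (r : ℝ) : Set (E d) :=
  {y ∈ ball01 d | hDist x y ≤ r}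

/-- A convex body in `H^d`: compact, convex (hyperbolically, i.e. in the Klein
model also Euclidean-convex), with nonempty interior, inside the model. -/
def IsBody {d : ℕ} (C : Set (E d)) : Prop :=
  IsCompact C ∧ Convex ℝ C ∧ (interior C).Nonempty ∧ C ⊆ ball01 d

/-- A hyperplane of `H^d` in the Klein model: a chord `{x ∈ B | ⟪u,x⟫ = c}` of
the unit ball, with `‖u‖ = 1` and `|c| < 1` (so the chord is nonempty). -/
structure HPlane (d : ℕ) where
  u : E d
  c : ℝ
  norm_u : ‖u‖ = 1
  abs_c : |c| < 1

/-- The underlying set of points of a hyperplane. -/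
def HPlane.carrier {d : ℕ} (H : HPlane d) : Set (E d) :=
  {x ∈ ball01 d | (inner ℝ H.u x : ℝ) = H.c}

/-- `H` supports `C`: they meet and `C` lies in the closed half-space
`⟪u,·⟫ ≤ c` (an orientation of the normal is chosen accordingly). -/
def Supports {d : ℕ} (H : HPlane d) (C : Set (E d)) : Prop :=
  (H.carrier ∩ C).Nonempty ∧ ∀ x ∈ C, (inner ℝ H.u x : ℝ) ≤ H.c

/-- Two hyperplanes are ultraparallel iff their closures (in `ℝ^d`, hence
including ideal boundary points) are disjoint. -/
def Ultraparallel {d : ℕ} (H K : HPlane d) : Prop :=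
  closure H.carrier ∩ closure K.carrier = ∅

/-- The width of `C` determined by a supporting hyperplane `H`: the distance
from `H` to a farthest ultraparallel supporting hyperplane of `C`. -/
def hwidth {d : ℕ} (C : Set (E d)) (H : HPlane d) : ℝ :=
  sSup {r | ∃ K : HPlane d, Ultraparallel H K ∧ Supports K C ∧
    r = hSetDist H.carrier K.carrier}

/-- Thickness: the minimum width over all supporting hyperplanes. -/
def thickness {d : ℕ} (C : Set (E d)) : ℝ :=
  sInf {r | ∃ H : HPlane d, Supports H C ∧ r = hwidth C H}

/-- A reduced body. -/
def IsReduced {d : ℕ} (R : Set (E d)) : Prop :=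
  IsBody R ∧ ∀ Z : Set (E d), IsBody Z → Z ⊆ R → Z ≠ R → thickness Z < thickness R

/-- The equidistant hypersurface to `H` at distance `t`, on the side
`⟪u,·⟫ < c` (the side on which supported bodies lie). -/
def equiSurf {d : ℕ} (H : HPlane d) (t : ℝ) : Set (E d) :=
  {x ∈ ball01 d | (inner ℝ H.u x : ℝ) < H.c ∧ hPointDist x H.carrier = t}

/-- The distance from `H` to the nearest equidistant hypersurface `E` to `H`
with `C ⊆ conv(H ∪ E)` (the thickness of the equidistant strip `conv(H ∪ E)`). -/
def equiLevel {d : ℕ} (C : Set (E d)) (H : HPlane d) : ℝ :=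
  sInf {t | 0 < t ∧ C ⊆ convexHull ℝ (H.carrier ∪ equiSurf H t)}

/-- `E_H(C)`: the nearest equidistant hypersurface to `H` such that `C` is
contained in the equidistant strip `conv(H ∪ E_H(C))`. -/
def EH {d : ℕ} (C : Set (E d)) (H : HPlane d) : Set (E d) :=
  equiSurf H (equiLevel C H)

/-- A body of constant width `δ`. -/
def ConstWidth {d : ℕ} (C : Set (E d)) (δ : ℝ) : Prop :=
  ∀ H : HPlane d, Supports H C → hwidth C H = δ

/-- A complete set of diameter `δ`: adding any point of `H^d` outside `C`
strictly increases the diameter. -/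
def IsComplete {d : ℕ} (C : Set (E d)) (δ : ℝ) : Prop :=
  hDiam C = δ ∧ ∀ x ∈ ball01 d, x ∉ C → hDiam (insert x C) > δ

/-- The circular arc `P_c(a,b)`: points `g` at hyperbolic distance `δ` from `c`
whose (hyperbolic = Euclidean, in the Klein model) segment to `c` meets the
segment `ab`. -/
def arcP {d : ℕ} (c a b : E d) (δ : ℝ) : Set (E d) :=
  {g ∈ ball01 d | hDist c g = δ ∧ (segment ℝ c g ∩ segment ℝ a b).Nonempty}


/-! A point within distance `δ` of every point of `C` can be added to `C` without increasing the
diameter, so completeness puts it in `C`; conversely `diam C = δ` puts `C` inside every ball.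
The diameter is a genuine supremum because `hDist` is continuous on the model, hence bounded on
the compact set `C × C`. -/

lemma inner_lt_one_of_mem_ball01 {d : ℕ} {x y : E d} (hx : x ∈ ball01 d) (hy : y ∈ ball01 d) :
    (inner ℝ x y : ℝ) < 1 := by
  rw [ball01, mem_ball_zero_iff] at hx hy
  calc (inner ℝ x y : ℝ) ≤ ‖x‖ * ‖y‖ := real_inner_le_norm x y
    _ < 1 := by nlinarith [norm_nonneg x, norm_nonneg y]

lemma continuousOn_hDist {d : ℕ} :
    ContinuousOn (fun p : E d × E d => hDist p.1 p.2) (ball01 d ×ˢ ball01 d) := by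
  rintro ⟨x, y⟩ ⟨hx, hy⟩
  have hxy := inner_lt_one_of_mem_ball01 hx hy
  rw [ball01, mem_ball_zero_iff] at hx hy
  have hsx : 0 < Real.sqrt (1 - ‖x‖ ^ 2) := Real.sqrt_pos.2 (by nlinarith [norm_nonneg x])
  have hsy : 0 < Real.sqrt (1 - ‖y‖ ^ 2) := Real.sqrt_pos.2 (by nlinarith [norm_nonneg y])
  have hz : 0 < (1 - (inner ℝ x y : ℝ)) /
      (Real.sqrt (1 - ‖x‖ ^ 2) * Real.sqrt (1 - ‖y‖ ^ 2)) := by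
    positivity
  refine ContinuousAt.continuousWithinAt (ContinuousAt.log ?_ (by positivity))
  fun_prop (disch := positivity)

lemma hDist_self {d : ℕ} {x : E d} (hx : x ∈ ball01 d) : hDist x x = 0 := by
  rw [ball01, mem_ball_zero_iff] at hx
  have hpos : 0 < 1 - ‖x‖ ^ 2 := by nlinarith [norm_nonneg x]
  simp [hDist, acosh, Real.mul_self_sqrt hpos.le, hpos.ne']

lemma hDist_comm {d : ℕ} (x y : E d) : hDist x y = hDist y x := by
  simp only [hDist, real_inner_comm x y, mul_comm]

lemma bddAbove_hDist_of_isCompact {d : ℕ} {K : Set (E d)} (hK : IsCompact K)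
    (hKb : K ⊆ ball01 d) :
    BddAbove {r | ∃ a ∈ K, ∃ b ∈ K, hDist a b = r} := by
  have hKK : K ×ˢ K ⊆ ball01 d ×ˢ ball01 d := prod_mono hKb hKb
  have himage :
      {r | ∃ a ∈ K, ∃ b ∈ K, hDist a b = r} = (fun p => hDist p.1 p.2) '' K ×ˢ K := by
    ext r
    simp
  exact himage ▸ ((hK.prod hK).image_of_continuousOn (continuousOn_hDist.mono hKK)).bddAbove

lemma hDist_le_hDiam {d : ℕ} {K : Set (E d)}
    (hK : BddAbove {r | ∃ a ∈ K, ∃ b ∈ K, hDist a b = r})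
    {a b : E d} (ha : a ∈ K) (hb : b ∈ K) : hDist a b ≤ hDiam K :=
  le_csSup hK ⟨a, ha, b, hb, rfl⟩

lemma hDiam_le {d : ℕ} {K : Set (E d)} (hK : K.Nonempty) {δ : ℝ}
    (h : ∀ a ∈ K, ∀ b ∈ K, hDist a b ≤ δ) : hDiam K ≤ δ := by
  obtain ⟨x, hx⟩ := hK
  refine csSup_le ⟨_, x, hx, x, hx, rfl⟩ ?_
  rintro r ⟨a, ha, b, hb, rfl⟩
  exact h a ha b hb

/-- A complete body of diameter `δ` equals the intersection of all closed
balls of radius `δ` centered at its points. -/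
theorem complete_eq_iInter_balls {d : ℕ} (C : Set (E d)) (hC : IsBody C)
    (δ : ℝ) (hcomp : IsComplete C δ) :
    C = ⋂ x ∈ C, hBall x δ := by
  obtain ⟨hcpt, -, hint, hsub⟩ := hC
  obtain ⟨hdiam, hmax⟩ := hcomp
  have hbdd := bddAbove_hDist_of_isCompact hcpt hsub
  have hdist (a) (ha : a ∈ C) (b) (hb : b ∈ C) : hDist a b ≤ δ :=
    hdiam ▸ hDist_le_hDiam hbdd ha hb
  obtain ⟨x₀, hx₀⟩ : C.Nonempty := hint.mono interior_subset
  have hδ : 0 ≤ δ := hDist_self (hsub hx₀) ▸ hdist x₀ hx₀ x₀ hx₀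
  refine Subset.antisymm (fun y hy => mem_iInter₂.2 fun x hx => ⟨hsub hy, hdist x hx y hy⟩) ?_
  intro y hy
  simp only [mem_iInter₂, hBall, mem_ofPred_eq] at hy
  have hyB : y ∈ ball01 d := (hy x₀ hx₀).1
  by_contra hyC
  refine (hmax y hyB hyC).not_ge (hDiam_le (insert_nonempty y C) ?_)
  rintro a (rfl | ha) b (rfl | hb)
  · exact (hDist_self hyB).symm ▸ hδ
  · exact hDist_comm a b ▸ (hy b hb).2
  · exact (hy a ha).2
  · exact hdist a ha b hb

end Hyp
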